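/- Let k be a field, R a commutative nonnegatively-graded k-algebra with R₀ = k and augmentation ideal R⁺, M a free R-module of finite rank r, and N ⊆ M an R-submodule such that N is free of rank equal to the k-dimension of the image of N in M/(R⁺M). Then the sequence 0 → R⁺N → N → image of N in M/(R⁺M) → 0 is exact, i.e., the kernel of the composite N ↪ M → M/(R⁺M) restricted to N equals R⁺·N. -/

import Mathlib

/-!
The ideal `R⁺` is the irrelevant ideal of the grading, and `R₀ = k` makes `k → R ⧸ R⁺`
bijective. Since `N` is free, `N ⧸ R⁺N ≅ (R ⧸ R⁺) ⊗ N` is then a `k`-vector space of dimension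
`rank N`. The map `ν` factors through `N ⧸ R⁺N` and surjects onto `ν(N)`, so the rank hypothesis
forces the induced map `N ⧸ R⁺N → ν(N)` to be injective, i.e. `ker ν = R⁺N`.
-/

open Module TensorProduct HomogeneousIdeal

theorem bijective_algebraMap_quotient_irrelevant {k R : Type*} [Field k] [CommRing R]
    [Nontrivial R] [Algebra k R] (𝒜 : ℕ → Submodule k R) [GradedAlgebra 𝒜] (h0 : 𝒜 0 = 1) :
    Function.Bijective (algebraMap k (R ⧸ (𝒜₊).toIdeal)) := by
  have proj_zero_of_mem {x : R} (hx : x ∈ 𝒜 0) : GradedRing.proj 𝒜 0 x = x := by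
    rw [GradedRing.proj_apply, DirectSum.decompose_of_mem_same 𝒜 hx]
  refine ⟨(injective_iff_map_eq_zero _).mpr fun c hc => ?_, fun q => ?_⟩
  · rw [← Ideal.Quotient.mk_algebraMap, Ideal.Quotient.eq_zero_iff_mem, mem_iff,
      mem_irrelevant_iff, proj_zero_of_mem (SetLike.algebraMap_mem_graded 𝒜 c)] at hc
    exact (algebraMap k R).injective (hc.trans (map_zero _).symm)
  · obtain ⟨r, rfl⟩ := Ideal.Quotient.mk_surjective q
    have hr₀ : GradedRing.proj 𝒜 0 r ∈ 𝒜 0 := SetLike.coe_mem _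
    obtain ⟨c, hc⟩ := Submodule.mem_one.mp (h0 ▸ hr₀)
    refine ⟨c, ?_⟩
    rw [← Ideal.Quotient.mk_algebraMap, Ideal.Quotient.eq, mem_iff, mem_irrelevant_iff, hc,
      map_sub, proj_zero_of_mem hr₀, sub_self]

theorem rank_quotient_smul_top_of_bijective_algebraMap {k R N : Type*} [Field k] [CommRing R]
    [Algebra k R] [AddCommGroup N] [Module R N] [Module k N] [IsScalarTower k R N]
    [Module.Free R N] [Module.Finite R N] {I : Ideal R}
    (hI : Function.Bijective (algebraMap k (R ⧸ I))) :
    Module.rank k (N ⧸ I • (⊤ : Submodule R N)) = finrank R N := by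
  have : Nontrivial (R ⧸ I) := hI.injective.nontrivial
  have : Nontrivial R := (Ideal.Quotient.mk_surjective (I := I)).nontrivial
  have hscalars : Module.rank k (N ⧸ I • (⊤ : Submodule R N)) =
      Module.rank (R ⧸ I) (N ⧸ I • (⊤ : Submodule R N)) :=
    rank_eq_of_equiv_equiv _ (AddEquiv.refl _) hI fun c x => by
      induction x using Submodule.Quotient.induction_on with
      | H y =>
        change Submodule.Quotient.mk (c • y) = _
        rw [← algebraMap_smul R c y]
        rfl
  let e : ((R ⧸ I) ⊗[R] N) ≃ₗ[R ⧸ I] N ⧸ I • (⊤ : Submodule R N) :=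
    (quotTensorEquivQuotSMul N I).extendScalarsOfSurjective Ideal.Quotient.mk_surjective
  rw [hscalars, finrank_eq_rank]
  simpa only [rank_baseChange, Cardinal.lift_lift, Cardinal.lift_inj] using e.lift_rank_eq.symm

theorem Submodule.ker_eq_of_finrank_quotient_eq_finrank_range {k R N Q : Type*} [Field k]
    [CommRing R] [Algebra k R] [AddCommGroup N] [Module R N] [Module k N] [IsScalarTower k R N]
    [AddCommGroup Q] [Module R Q] [Module k Q] [IsScalarTower k R Q]
    {p : Submodule R N} [FiniteDimensional k (N ⧸ p)] {f : N →ₗ[R] Q} (hp : p ≤ LinearMap.ker f)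
    (h : finrank k (N ⧸ p) = finrank k ((LinearMap.range f).restrictScalars k)) :
    LinearMap.ker f = p := by
  let g := (p.liftQ f hp).restrictScalars k
  have hrange : LinearMap.range g = (LinearMap.range f).restrictScalars k := by
    rw [LinearMap.range_restrictScalars, range_liftQ]
  have hg : Function.Injective g := by
    have := (LinearMap.injective_iff_surjective_of_finrank_eq_finrank (hrange ▸ h)).mpr
      g.surjective_rangeRestrict
    rwa [← LinearMap.ker_eq_bot, LinearMap.ker_rangeRestrict, LinearMap.ker_eq_bot] at this
  refine le_antisymm (fun x hx => ?_) hp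
  rw [← Quotient.mk_eq_zero]
  exact hg (by simpa [g] using hx)

theorem stmt10_general {k R : Type*} [Field k] [CommRing R] [Algebra k R]
    (𝒜 : ℕ → Submodule k R) [GradedAlgebra 𝒜] (h0 : 𝒜 0 = (1 : Submodule k R))
    (Rplus : Ideal R) (hRplus : Rplus = Ideal.span {a : R | ∃ n, 0 < n ∧ a ∈ 𝒜 n})
    {M : Type*} [AddCommGroup M] [Module R M] [Module k M] [IsScalarTower k R M]
    (N : Submodule R M) [Module.Free R N] [Module.Finite R N]
    (ν : N →ₗ[R] M ⧸ (Rplus • ⊤ : Submodule R M))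
    (hν : ν = (Rplus • ⊤ : Submodule R M).mkQ.comp N.subtype)
    (hrank : Module.finrank R N =
      Module.finrank k (Submodule.restrictScalars k (LinearMap.range ν))) :
    LinearMap.ker ν = (Rplus • ⊤ : Submodule R N) := by
  nontriviality R
  obtain rfl : Rplus = (𝒜₊).toIdeal := by
    rw [hRplus, irrelevant_eq_span]
    congr 1
    ext
    simp
  have hrk := rank_quotient_smul_top_of_bijective_algebraMap (N := N)
    (bijective_algebraMap_quotient_irrelevant 𝒜 h0)
  have : FiniteDimensional k (N ⧸ (𝒜₊).toIdeal • (⊤ : Submodule R N)) :=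
    rank_lt_aleph0_iff.mp (hrk ▸ Cardinal.natCast_lt_aleph0)
  subst hν
  refine Submodule.ker_eq_of_finrank_quotient_eq_finrank_range ?_
    ((finrank_eq_of_rank_eq hrk).trans hrank)
  rw [LinearMap.ker_comp, Submodule.ker_mkQ]
  exact Submodule.smul_top_le_comap_smul_top _ _

/-- For a graded k-algebra R with R₀ = k, a finite free R-module M
and a submodule N free of rank equal to dim_k of its image ν(N) in M/(R⁺M), the
kernel of ν : N → M/(R⁺M) equals R⁺·N, i.e. 0 → R⁺N → N → ν(N) → 0 is exact. -/
theorem stmt10 {k R : Type*} [Field k] [CommRing R] [Algebra k R]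
    (𝒜 : ℕ → Submodule k R) [GradedAlgebra 𝒜] (h0 : 𝒜 0 = (1 : Submodule k R))
    (Rplus : Ideal R) (hRplus : Rplus = Ideal.span {a : R | ∃ n, 0 < n ∧ a ∈ 𝒜 n})
    {M : Type*} [AddCommGroup M] [Module R M] [Module k M] [IsScalarTower k R M]
    [Module.Free R M] [Module.Finite R M]
    (N : Submodule R M) [Module.Free R N] [Module.Finite R N]
    (ν : N →ₗ[R] M ⧸ (Rplus • ⊤ : Submodule R M))
    (hν : ν = (Rplus • ⊤ : Submodule R M).mkQ.comp N.subtype)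
    (hrank : Module.finrank R N =
      Module.finrank k (Submodule.restrictScalars k (LinearMap.range ν))) :
    LinearMap.ker ν = (Rplus • ⊤ : Submodule R N) :=
  stmt10_general 𝒜 h0 Rplus hRplus N ν hν hrank
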